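/- Let (X, f_{1,∞}) be a nonautonomous system with f_{1,∞} periodic of period k (f_{i+k} = f_i for all i), and K ⊆ X nonempty. Then for any finite open cover 𝒰 of X and any s > 0, the upper s-entropy of the k-th power system with respect to the cover 𝒰_1^k = ⋁_{j=0}^{k-1} f_1^{-j}(𝒰) satisfies h̄_K(f_{1,∞}^k, s, 𝒰_1^k) ≥ k^s · h̄_K(f_{1,∞}, s, 𝒰), and hence D̄_K(f_{1,∞}^k) = D̄_K(f_{1,∞}). -/

import Mathlib

open Filter Set Topology
open scoped ENNReal NNReal

noncomputable section

/-- `comps f i n` is the composition `f_i^n = f_{i+n-1} ∘ ⋯ ∘ f_i` (indices from 1). -/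
def comps {X : Type*} (f : ℕ → X → X) (i : ℕ) : ℕ → X → X
  | 0 => id
  | n + 1 => f (i + n) ∘ comps f i n

/-- Minimal cardinality (in `ℕ∞`) of a subfamily of `U` covering `K`. -/
def coverNumOn {X : Type*} (K : Set X) (U : Set (Set X)) : ℕ∞ :=
  sInf {n : ℕ∞ | ∃ F ⊆ U, F.Finite ∧ (F.ncard : ℕ∞) = n ∧ K ⊆ ⋃₀ F}

/-- `U` is a finite open cover of the whole space. -/
def IsFiniteOpenCover {X : Type*} [TopologicalSpace X] (U : Set (Set X)) : Prop :=
  U.Finite ∧ (∀ u ∈ U, IsOpen u) ∧ ⋃₀ U = Set.univ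

/-- Dynamical join `⋁_{j=0}^{n-1} (f_i^j)⁻¹ 𝒰`. -/
def dynJoin {X : Type*} (f : ℕ → X → X) (i : ℕ) (U : Set (Set X)) (n : ℕ) : Set (Set X) :=
  {V | ∃ c : ℕ → Set X, (∀ j < n, c j ∈ U) ∧ V = ⋂ j ∈ Finset.range n, comps f i j ⁻¹' c j}

/-- Upper `s`-entropy of the system started at time `i` w.r.t. the cover `U`, on `K`. -/
def hCover {X : Type*} (f : ℕ → X → X) (i : ℕ) (K : Set X) (U : Set (Set X)) (s : ℝ) : ℝ≥0∞ :=
  Filter.limsup (fun n : ℕ =>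
    ENNReal.ofReal (Real.log ((coverNumOn K (dynJoin f i U n)).toNat)) / (n : ℝ≥0∞) ^ s)
    Filter.atTop

/-- Upper `s`-entropy: supremum over all finite open covers. -/
def hCoverSup {X : Type*} [TopologicalSpace X] (f : ℕ → X → X) (i : ℕ) (K : Set X) (s : ℝ) :
    ℝ≥0∞ :=
  ⨆ U ∈ {U : Set (Set X) | IsFiniteOpenCover U}, hCover f i K U s

/-- Upper classical topological entropy dimension (cover version), in `ℝ≥0∞`. -/
def DbarCover {X : Type*} [TopologicalSpace X] (f : ℕ → X → X) (i : ℕ) (K : Set X) : ℝ≥0∞ :=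
  sInf (ENNReal.ofReal '' {s : ℝ | 0 < s ∧ hCoverSup f i K s = 0})

section Metric
variable {X : Type*} [PseudoMetricSpace X]

/-- `E` is an `(n,ε)`-spanning set of `K`. -/
def IsSpanningSet (f : ℕ → X → X) (K : Set X) (n : ℕ) (ε : ℝ) (E : Set X) : Prop :=
  ∀ y ∈ K, ∃ x ∈ E, ∀ j < n, dist (comps f 1 j y) (comps f 1 j x) ≤ ε

/-- `F` is an `(n,ε)`-separated subset of `K`. -/
def IsSepSet (f : ℕ → X → X) (K : Set X) (n : ℕ) (ε : ℝ) (F : Set X) : Prop :=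
  F ⊆ K ∧ ∀ x ∈ F, ∀ y ∈ F, x ≠ y → ∃ j < n, ε < dist (comps f 1 j x) (comps f 1 j y)

/-- Minimal cardinality of an `(n,ε)`-spanning set of `K`. -/
def spanNum (f : ℕ → X → X) (K : Set X) (n : ℕ) (ε : ℝ) : ℕ :=
  sInf {m : ℕ | ∃ E : Set X, E.Finite ∧ E.ncard = m ∧ IsSpanningSet f K n ε E}

/-- Maximal cardinality of an `(n,ε)`-separated subset of `K`. -/
def sepNum (f : ℕ → X → X) (K : Set X) (n : ℕ) (ε : ℝ) : ℕ :=
  sSup {m : ℕ | ∃ F : Set X, F.Finite ∧ F.ncard = m ∧ IsSepSet f K n ε F}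

/-- Upper `s`-entropy via spanning sets. -/
def hSpan (f : ℕ → X → X) (K : Set X) (s : ℝ) : ℝ≥0∞ :=
  Filter.limsup (fun ε : ℝ =>
    Filter.limsup
      (fun n : ℕ => ENNReal.ofReal (Real.log (spanNum f K n ε : ℝ)) / (n : ℝ≥0∞) ^ s)
      Filter.atTop) (𝓝[>] (0 : ℝ))

/-- Upper `s`-entropy via separated sets. -/
def hSep (f : ℕ → X → X) (K : Set X) (s : ℝ) : ℝ≥0∞ :=
  Filter.limsup (fun ε : ℝ =>
    Filter.limsup
      (fun n : ℕ => ENNReal.ofReal (Real.log (sepNum f K n ε : ℝ)) / (n : ℝ≥0∞) ^ s)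
      Filter.atTop) (𝓝[>] (0 : ℝ))

/-- Lower `s`-entropy via separated sets. -/
def hSepLow (f : ℕ → X → X) (K : Set X) (s : ℝ) : ℝ≥0∞ :=
  Filter.limsup (fun ε : ℝ =>
    Filter.liminf
      (fun n : ℕ => ENNReal.ofReal (Real.log (sepNum f K n ε : ℝ)) / (n : ℝ≥0∞) ^ s)
      Filter.atTop) (𝓝[>] (0 : ℝ))

/-- Upper entropy dimension (spanning-set version). -/
def DbarSpan (f : ℕ → X → X) (K : Set X) : ℝ≥0∞ :=
  sInf (ENNReal.ofReal '' {s : ℝ | 0 < s ∧ hSpan f K s = 0})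

/-- Upper entropy dimension (separated-set version). -/
def DbarSep (f : ℕ → X → X) (K : Set X) : ℝ≥0∞ :=
  sInf (ENNReal.ofReal '' {s : ℝ | 0 < s ∧ hSep f K s = 0})

/-- Lower entropy dimension (separated-set version). -/
def DlowSep (f : ℕ → X → X) (K : Set X) : ℝ≥0∞ :=
  sInf (ENNReal.ofReal '' {s : ℝ | 0 < s ∧ hSepLow f K s = 0})

/-- Diameter of a cover. -/
def covDiam (U : Set (Set X)) : ℝ≥0∞ := ⨆ u ∈ U, EMetric.diam u

end Metric

section Pesin
variable {X : Type*}

/-- The set `X(𝐔)` determined by a string `p = (m, c)`. -/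
def stringSet (f : ℕ → X → X) (p : ℕ × (ℕ → Set X)) : Set X :=
  ⋂ j ∈ Finset.range p.1, comps f 1 j ⁻¹' p.2 j

/-- `G` is a countable collection of strings over `U` of length `≥ N` covering `K`. -/
def IsStringCover (f : ℕ → X → X) (U : Set (Set X)) (K : Set X) (N : ℕ)
    (G : Set (ℕ × (ℕ → Set X))) : Prop :=
  G.Countable ∧ (∀ p ∈ G, N ≤ p.1 ∧ ∀ j < p.1, p.2 j ∈ U) ∧ K ⊆ ⋃ p ∈ G, stringSet f p

/-- The Carathéodory–Pesin pre-measure `M(f,K,s,𝒰,α,N)`. -/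
def pesinM (f : ℕ → X → X) (K : Set X) (s : ℝ) (U : Set (Set X)) (α : ℝ) (N : ℕ) : ℝ≥0∞ :=
  sInf {t : ℝ≥0∞ | ∃ G : Set (ℕ × (ℕ → Set X)), IsStringCover f U K N G ∧
    t = ∑' p : G, ENNReal.ofReal (Real.exp (-α * (p.1.1 : ℝ) ^ s))}

/-- The Carathéodory–Pesin outer measure `m(f,K,s,𝒰,α) = lim_{N→∞} M(f,K,s,𝒰,α,N)`. -/
def pesinOuter (f : ℕ → X → X) (K : Set X) (s : ℝ) (U : Set (Set X)) (α : ℝ) : ℝ≥0∞ :=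
  ⨆ N : ℕ, pesinM f K s U α N

/-- Critical value `D(f,K,s,𝒰)` where `m(f,K,s,𝒰,·)` jumps from `∞` to `0`. -/
def pesinCrit (f : ℕ → X → X) (K : Set X) (s : ℝ) (U : Set (Set X)) : EReal :=
  sInf ((fun α : ℝ => (α : EReal)) '' {α : ℝ | pesinOuter f K s U α = 0})

/-- The Pesin `s`-topological entropy `D(f,K,s)`. -/
def pesinEnt [TopologicalSpace X] (f : ℕ → X → X) (K : Set X) (s : ℝ) : EReal :=
  ⨆ U ∈ {U : Set (Set X) | IsFiniteOpenCover U}, pesinCrit f K s U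

/-- The Pesin topological entropy dimension `D(f,K)`. -/
def pesinDim [TopologicalSpace X] (f : ℕ → X → X) (K : Set X) : ℝ≥0∞ :=
  sInf (ENNReal.ofReal '' {s : ℝ | 0 < s ∧ pesinEnt f K s = 0})

end Pesin

end

/-!
Periodicity makes the `n`-th iterate of the `k`-th power system the `nk`-th iterate of `f`, and
splitting times `m < nk` as `m = jk + l` identifies the `n`-step join of `𝒰_1^k` under the power
system with the `nk`-step join of `𝒰` under `f`. Hence `h̄_K(f^k, s, 𝒰_1^k)` is the `limsup` of
`log N(nk) / n^s = k^s · log N(nk) / (nk)^s`, and since `N(m)` grows with `m`, the `limsup` of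
`log N(m) / m^s` along the multiples of `k` is the full one. For an arbitrary cover, the `n`-step
join under `f^k` is refined by the `nk`-step join under `f`, so
`h̄_K(f^k, s, 𝒰) ≤ k^s h̄_K(f, s, 𝒰)`. Thus the two supremal `s`-entropies vanish for the same
`s`, and the dimensions agree.
-/

namespace ENNReal

lemma tendsto_one_add_const_div_nat_rpow {a : ℝ≥0∞} (ha : a ≠ ⊤) (s : ℝ) :
    Tendsto (fun m : ℕ => (1 + a / m) ^ s) atTop (𝓝 1) := by
  have h : Tendsto (fun m : ℕ => 1 + a / m) atTop (𝓝 1) := by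
    simpa using (ENNReal.Tendsto.const_div ENNReal.tendsto_nat_nhds_top (Or.inr ha)).const_add 1
  simpa [Function.comp_def] using (ENNReal.continuous_rpow_const.tendsto 1).comp h

lemma div_rpow_le_div_rpow_mul {A : ℕ → ℝ≥0∞} (hA : Monotone A) {k : ℕ} (hk : 0 < k) {s : ℝ}
    (hs : 0 < s) {m : ℕ} (hm : m ≠ 0) :
    A m / (m : ℝ≥0∞) ^ s ≤
      A ((m / k + 1) * k) / (((m / k + 1) * k : ℕ) : ℝ≥0∞) ^ s * (1 + k / m) ^ s := by
  set N := (m / k + 1) * k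
  have hmN : m ≤ N := (Nat.lt_div_mul_add hk).le.trans (by simp [N, add_mul])
  have hNm : N ≤ m + k := by simpa [N, add_mul] using Nat.div_mul_le_self m k
  have hN0 : (N : ℝ≥0∞) ^ s ≠ 0 := by positivity
  have hNtop : (N : ℝ≥0∞) ^ s ≠ ⊤ := by simp [hs.le]
  have hm0 : (m : ℝ≥0∞) ^ s ≠ 0 := by positivity
  have hmtop : (m : ℝ≥0∞) ^ s ≠ ⊤ := by simp [hs.le]
  have hN : (N : ℝ≥0∞) ^ s ≤ (m : ℝ≥0∞) ^ s * (1 + k / m) ^ s := by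
    rw [← ENNReal.mul_rpow_of_nonneg _ _ hs.le, mul_add, mul_one,
      ENNReal.mul_div_cancel (by simpa using hm) (by simp)]
    exact ENNReal.rpow_le_rpow (by exact_mod_cast hNm) hs.le
  calc A m / (m : ℝ≥0∞) ^ s ≤ A N / (m : ℝ≥0∞) ^ s := by gcongr; exact hA hmN
    _ = A N / (N : ℝ≥0∞) ^ s * (N : ℝ≥0∞) ^ s / (m : ℝ≥0∞) ^ s := by
      rw [ENNReal.div_mul_cancel hN0 hNtop]
    _ ≤ A N / (N : ℝ≥0∞) ^ s * ((m : ℝ≥0∞) ^ s * (1 + k / m) ^ s) / (m : ℝ≥0∞) ^ s := by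
      gcongr
    _ = A N / (N : ℝ≥0∞) ^ s * (1 + k / m) ^ s := by
      rw [← mul_assoc, mul_right_comm, ENNReal.mul_div_cancel_right hm0 hmtop]

lemma limsup_div_rpow_comp_mul {A : ℕ → ℝ≥0∞} (hA : Monotone A) {k : ℕ} (hk : 0 < k) {s : ℝ}
    (hs : 0 < s) :
    limsup (fun n : ℕ => A (n * k) / ((n * k : ℕ) : ℝ≥0∞) ^ s) atTop =
      limsup (fun m : ℕ => A m / (m : ℝ≥0∞) ^ s) atTop := by
  set φ : ℕ → ℝ≥0∞ := fun m => A m / (m : ℝ≥0∞) ^ s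
  have hmul : Tendsto (· * k) atTop atTop :=
    tendsto_atTop_mono (fun n => Nat.le_mul_of_pos_right n hk) tendsto_id
  refine le_antisymm (hmul.limsup_comp_le_limsup (u := φ)) ?_
  have hnext : Tendsto (fun m => m / k + 1) atTop atTop :=
    tendsto_atTop_mono (fun m => Nat.le_succ _) (Nat.tendsto_div_const_atTop hk.ne')
  have hr := tendsto_one_add_const_div_nat_rpow (natCast_ne_top k) s
  -- `(m / k + 1) * k` is the first multiple of `k` above `m`; it exceeds `m` by at most `k`.
  calc limsup φ atTop
      ≤ limsup ((fun m => φ ((m / k + 1) * k)) * fun m : ℕ => (1 + (k : ℝ≥0∞) / m) ^ s)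
          atTop := by
        refine limsup_le_limsup ?_
        filter_upwards [eventually_ne_atTop 0] with m hm
        exact div_rpow_le_div_rpow_mul hA hk hs hm
    _ ≤ limsup (fun m => φ ((m / k + 1) * k)) atTop *
          limsup (fun m : ℕ => (1 + (k : ℝ≥0∞) / m) ^ s) atTop :=
        ENNReal.limsup_mul_le' (Or.inr (by simp [hr.limsup_eq]))
          (Or.inr (by simp [hr.limsup_eq]))
    _ ≤ limsup (fun n => φ (n * k)) atTop := by
        rw [hr.limsup_eq, mul_one]
        exact hnext.limsup_comp_le_limsup (u := fun n => φ (n * k))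

lemma limsup_apply_mul_div_rpow {A : ℕ → ℝ≥0∞} (hA : Monotone A) {k : ℕ} (hk : 0 < k) {s : ℝ}
    (hs : 0 < s) :
    limsup (fun n : ℕ => A (n * k) / (n : ℝ≥0∞) ^ s) atTop =
      (k : ℝ≥0∞) ^ s * limsup (fun m : ℕ => A m / (m : ℝ≥0∞) ^ s) atTop := by
  have hk0 : (k : ℝ≥0∞) ^ s ≠ 0 := by positivity
  have hktop : (k : ℝ≥0∞) ^ s ≠ ⊤ := by simp [hs.le]
  rw [← limsup_div_rpow_comp_mul hA hk hs, ← ENNReal.limsup_const_mul_of_ne_top hktop]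
  refine limsup_congr (Eventually.of_forall fun n => ?_)
  rw [Nat.cast_mul, ENNReal.mul_rpow_of_nonneg _ _ hs.le, ← mul_div_assoc, mul_comm _ (A _),
    ENNReal.mul_div_mul_right _ _ hk0 hktop]

end ENNReal

lemma biInter_range_mul {α : Type*} (S : ℕ → Set α) (n k : ℕ) :
    ⋂ m ∈ Finset.range (n * k), S m =
      ⋂ j ∈ Finset.range n, ⋂ l ∈ Finset.range k, S (j * k + l) := by
  rcases k.eq_zero_or_pos with rfl | hk
  · simp
  ext x
  simp only [mem_iInter, Finset.mem_range]
  refine ⟨fun h j hj l hl => h _ (by nlinarith), fun h m hm => ?_⟩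
  simpa [Nat.div_add_mod'] using
    h (m / k) ((Nat.div_lt_iff_lt_mul hk).2 hm) (m % k) (Nat.mod_lt _ hk)

section Covers

variable {X : Type*}

def Refines (V W : Set (Set X)) : Prop := ∀ v ∈ V, ∃ w ∈ W, v ⊆ w

lemma coverNumOn_le_of_refines {K : Set X} {V W : Set (Set X)} (h : Refines V W) :
    coverNumOn K W ≤ coverNumOn K V := by
  choose! φ hφW hφsub using h
  refine le_sInf ?_
  rintro _ ⟨F, hFV, hF, rfl, hKF⟩
  refine sInf_le_of_le ⟨φ '' F, image_subset_iff.2 fun v hv => hφW v (hFV hv), hF.image φ, rfl,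
    hKF.trans (sUnion_subset fun v hv => (hφsub v (hFV hv)).trans (subset_sUnion_of_mem
      (mem_image_of_mem φ hv)))⟩ ?_
  exact_mod_cast ncard_image_le hF

lemma coverNumOn_ne_top {K : Set X} {W : Set (Set X)} (hW : W.Finite) (hKW : K ⊆ ⋃₀ W) :
    coverNumOn K W ≠ ⊤ :=
  ne_top_of_le_ne_top (ENat.natCast_ne_top _) (sInf_le ⟨W, subset_rfl, hW, rfl, hKW⟩)

noncomputable def logCoverNumOn (K : Set X) (U : Set (Set X)) : ℝ≥0∞ :=
  ENNReal.ofReal (Real.log (coverNumOn K U).toNat)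

lemma logCoverNumOn_le_of_refines {K : Set X} {V W : Set (Set X)} (hV : V.Finite)
    (hKV : K ⊆ ⋃₀ V) (h : Refines V W) : logCoverNumOn K W ≤ logCoverNumOn K V := by
  have hle := ENat.toNat_le_toNat (coverNumOn_le_of_refines (K := K) h) (coverNumOn_ne_top hV hKV)
  refine ENNReal.ofReal_le_ofReal ?_
  rcases (coverNumOn K W).toNat.eq_zero_or_pos with h0 | hpos
  · simp [h0, Real.log_natCast_nonneg]
  · exact Real.log_le_log (by positivity) (by exact_mod_cast hle)

lemma hCover_eq_limsup (f : ℕ → X → X) (i : ℕ) (K : Set X) (U : Set (Set X)) (s : ℝ) :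
    hCover f i K U s =
      limsup (fun n : ℕ => logCoverNumOn K (dynJoin f i U n) / (n : ℝ≥0∞) ^ s) atTop :=
  rfl

end Covers

section Joins

variable {X : Type*}

lemma comps_add (f : ℕ → X → X) (i a b : ℕ) :
    comps f i (a + b) = comps f (i + a) b ∘ comps f i a := by
  induction b with
  | zero => rfl
  | succ b ih =>
    change f (i + (a + b)) ∘ comps f i (a + b) = f (i + a + b) ∘ comps f (i + a) b ∘ comps f i a
    rw [ih, add_assoc]

lemma continuous_comps [TopologicalSpace X] {f : ℕ → X → X} (hf : ∀ i, Continuous (f i))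
    (i n : ℕ) : Continuous (comps f i n) := by
  induction n with
  | zero => exact continuous_id
  | succ n ih => exact (hf (i + n)).comp ih

lemma dynJoin_finite (f : ℕ → X → X) (i : ℕ) {U : Set (Set X)} (hU : U.Finite) (n : ℕ) :
    (dynJoin f i U n).Finite := by
  have := hU.to_subtype
  refine (finite_range fun c : Fin n → U => ⋂ j : Fin n, comps f i j ⁻¹' (c j : Set X)).subset ?_
  rintro _ ⟨c, hc, rfl⟩
  refine ⟨fun j => ⟨c j, hc j j.2⟩, ?_⟩
  ext x
  simp [Fin.forall_iff]

lemma sUnion_dynJoin (f : ℕ → X → X) (i : ℕ) {U : Set (Set X)} (hU : ⋃₀ U = univ) (n : ℕ) :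
    ⋃₀ dynJoin f i U n = univ := by
  refine eq_univ_of_forall fun x => ?_
  choose c hcU hxc using fun j => mem_sUnion.1 (hU ▸ mem_univ (comps f i j x))
  exact ⟨_, ⟨c, fun j _ => hcU j, rfl⟩, mem_iInter₂.2 fun j _ => hxc j⟩

lemma IsFiniteOpenCover.dynJoin [TopologicalSpace X] {f : ℕ → X → X}
    (hf : ∀ i, Continuous (f i)) {U : Set (Set X)} (hU : IsFiniteOpenCover U) (i n : ℕ) :
    IsFiniteOpenCover (dynJoin f i U n) := by
  refine ⟨dynJoin_finite f i hU.1 n, ?_, sUnion_dynJoin f i hU.2.2 n⟩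
  rintro _ ⟨c, hc, rfl⟩
  exact isOpen_biInter_finset fun j hj =>
    (hU.2.1 _ (hc j (Finset.mem_range.1 hj))).preimage (continuous_comps hf i j)

lemma dynJoin_refines_of_le (f : ℕ → X → X) (i : ℕ) (U : Set (Set X)) {m n : ℕ} (h : m ≤ n) :
    Refines (dynJoin f i U n) (dynJoin f i U m) := by
  rintro _ ⟨c, hc, rfl⟩
  refine ⟨_, ⟨c, fun j hj => hc j (hj.trans_le h), rfl⟩, ?_⟩
  exact biInter_subset_biInter_left (Finset.range_mono h)

lemma monotone_logCoverNumOn_dynJoin (f : ℕ → X → X) (i : ℕ) (K : Set X) {U : Set (Set X)}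
    (hU : U.Finite) (hUcov : ⋃₀ U = univ) :
    Monotone fun n => logCoverNumOn K (dynJoin f i U n) := fun _ n h =>
  logCoverNumOn_le_of_refines (dynJoin_finite f i hU n) (by simp [sUnion_dynJoin f i hUcov])
    (dynJoin_refines_of_le f i U h)

end Joins

section Periodic

variable {X : Type*} {f g : ℕ → X → X} {k : ℕ}

lemma apply_add_mul_of_periodic (hper : ∀ i, 1 ≤ i → f (i + k) = f i) (j : ℕ) {i : ℕ}
    (hi : 1 ≤ i) : f (i + j * k) = f i := by
  induction j with
  | zero => simp
  | succ j ih => rw [add_mul, one_mul, ← add_assoc, hper _ (by omega), ih]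

lemma comps_add_mul_of_periodic (hper : ∀ i, 1 ≤ i → f (i + k) = f i) (j l : ℕ) {i : ℕ}
    (hi : 1 ≤ i) : comps f (i + j * k) l = comps f i l := by
  induction l with
  | zero => rfl
  | succ l ih =>
    change f (i + j * k + l) ∘ comps f (i + j * k) l = f (i + l) ∘ comps f i l
    rw [ih, add_right_comm, apply_add_mul_of_periodic hper j (by omega)]

lemma comps_mul_add_of_periodic (hper : ∀ i, 1 ≤ i → f (i + k) = f i) (j l : ℕ) :
    comps f 1 (j * k + l) = comps f 1 l ∘ comps f 1 (j * k) := by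
  rw [comps_add, comps_add_mul_of_periodic hper j l le_rfl]

lemma comps_power (hper : ∀ i, 1 ≤ i → f (i + k) = f i)
    (hg : ∀ j, g j = comps f ((j - 1) * k + 1) k) (n : ℕ) :
    comps g 1 n = comps f 1 (n * k) := by
  induction n with
  | zero => simp [comps]
  | succ n ih =>
    change g (1 + n) ∘ comps g 1 n = comps f 1 ((n + 1) * k)
    rw [ih, hg, add_tsub_cancel_left, add_comm _ 1, comps_add_mul_of_periodic hper n k le_rfl,
      add_one_mul, comps_mul_add_of_periodic hper n k]

lemma preimage_comps_power (hper : ∀ i, 1 ≤ i → f (i + k) = f i)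
    (hg : ∀ j, g j = comps f ((j - 1) * k + 1) k) (j l : ℕ) (S : Set X) :
    comps g 1 j ⁻¹' (comps f 1 l ⁻¹' S) = comps f 1 (j * k + l) ⁻¹' S := by
  rw [comps_mul_add_of_periodic hper, preimage_comp, comps_power hper hg]

lemma dynJoin_power_dynJoin (hper : ∀ i, 1 ≤ i → f (i + k) = f i)
    (hg : ∀ j, g j = comps f ((j - 1) * k + 1) k) (hk : 0 < k) (U : Set (Set X)) (n : ℕ) :
    dynJoin g 1 (dynJoin f 1 U k) n = dynJoin f 1 U (n * k) := by
  ext V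
  constructor
  · rintro ⟨d, hd, rfl⟩
    choose! C hCU hC using hd
    refine ⟨fun m => C (m / k) (m % k), fun m hm =>
      hCU _ ((Nat.div_lt_iff_lt_mul hk).2 hm) _ (Nat.mod_lt _ hk), ?_⟩
    rw [biInter_range_mul]
    refine iInter₂_congr fun j hj => ?_
    rw [hC j (Finset.mem_range.1 hj), preimage_iInter₂]
    refine iInter₂_congr fun l hl => ?_
    have hlk := Finset.mem_range.1 hl
    beta_reduce
    rw [preimage_comps_power hper hg, Nat.mul_comm j k, Nat.mul_add_div hk, Nat.mul_add_mod,
      Nat.div_eq_of_lt hlk, Nat.mod_eq_of_lt hlk, add_zero]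
  · rintro ⟨c, hc, rfl⟩
    refine ⟨fun j => ⋂ l ∈ Finset.range k, comps f 1 l ⁻¹' c (j * k + l), fun j hj =>
      ⟨fun l => c (j * k + l), fun l hl => hc _ (by nlinarith), rfl⟩, ?_⟩
    simp only [biInter_range_mul, preimage_iInter₂, preimage_comps_power hper hg]

lemma dynJoin_mul_refines_dynJoin_power (hper : ∀ i, 1 ≤ i → f (i + k) = f i)
    (hg : ∀ j, g j = comps f ((j - 1) * k + 1) k) (hk : 0 < k) (U : Set (Set X)) (n : ℕ) :
    Refines (dynJoin f 1 U (n * k)) (dynJoin g 1 U n) := by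
  rintro _ ⟨c, hc, rfl⟩
  refine ⟨_, ⟨fun j => c (j * k), fun j hj => hc _ (Nat.mul_lt_mul_of_pos_right hj hk), rfl⟩, ?_⟩
  simp only [comps_power hper hg]
  exact iInter₂_mono' fun j hj => ⟨j * k, Finset.mem_range.2
    (Nat.mul_lt_mul_of_pos_right (Finset.mem_range.1 hj) hk), subset_rfl⟩

end Periodic

section PowerRule

variable {X : Type*} {f g : ℕ → X → X} {k : ℕ}

lemma hCover_power_dynJoin (hper : ∀ i, 1 ≤ i → f (i + k) = f i)
    (hg : ∀ j, g j = comps f ((j - 1) * k + 1) k) (hk : 0 < k) (K : Set X) {U : Set (Set X)}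
    (hU : U.Finite) (hUcov : ⋃₀ U = univ) {s : ℝ} (hs : 0 < s) :
    hCover g 1 K (dynJoin f 1 U k) s = (k : ℝ≥0∞) ^ s * hCover f 1 K U s := by
  simp only [hCover_eq_limsup, dynJoin_power_dynJoin hper hg hk]
  exact ENNReal.limsup_apply_mul_div_rpow (A := fun n => logCoverNumOn K (dynJoin f 1 U n))
    (monotone_logCoverNumOn_dynJoin f 1 K hU hUcov) hk hs

lemma hCover_power_le (hper : ∀ i, 1 ≤ i → f (i + k) = f i)
    (hg : ∀ j, g j = comps f ((j - 1) * k + 1) k) (hk : 0 < k) (K : Set X) {U : Set (Set X)}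
    (hU : U.Finite) (hUcov : ⋃₀ U = univ) {s : ℝ} (hs : 0 < s) :
    hCover g 1 K U s ≤ (k : ℝ≥0∞) ^ s * hCover f 1 K U s := by
  rw [hCover_eq_limsup, hCover_eq_limsup, ← ENNReal.limsup_apply_mul_div_rpow
    (A := fun n => logCoverNumOn K (dynJoin f 1 U n))
    (monotone_logCoverNumOn_dynJoin f 1 K hU hUcov) hk hs]
  refine limsup_le_limsup (Eventually.of_forall fun n => ?_)
  exact ENNReal.div_le_div_right (logCoverNumOn_le_of_refines (dynJoin_finite f 1 hU _)
    (by simp [sUnion_dynJoin f 1 hUcov]) (dynJoin_mul_refines_dynJoin_power hper hg hk U n)) _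

lemma hCoverSup_power_eq_zero_iff [TopologicalSpace X] (hf : ∀ i, Continuous (f i))
    (hper : ∀ i, 1 ≤ i → f (i + k) = f i) (hg : ∀ j, g j = comps f ((j - 1) * k + 1) k)
    (hk : 0 < k) (K : Set X) {s : ℝ} (hs : 0 < s) :
    hCoverSup g 1 K s = 0 ↔ hCoverSup f 1 K s = 0 := by
  simp only [hCoverSup, ENNReal.iSup_eq_zero]
  refine ⟨fun h U hU => ?_, fun h U hU => ?_⟩
  · have h0 := h _ (hU.dynJoin hf 1 k)
    rw [hCover_power_dynJoin hper hg hk K hU.1 hU.2.2 hs, mul_eq_zero] at h0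
    exact h0.resolve_left (by positivity)
  · exact nonpos_iff_eq_zero.1 <|
      (hCover_power_le hper hg hk K hU.1 hU.2.2 hs).trans_eq (by rw [h U hU, mul_zero])

end PowerRule

theorem power_rule_periodic_general {X : Type*} [TopologicalSpace X] (f : ℕ → X → X)
    (hf : ∀ i, Continuous (f i)) (k : ℕ) (hk : 1 ≤ k)
    (hper : ∀ i, 1 ≤ i → f (i + k) = f i) (K : Set X)
    (g : ℕ → X → X) (hg : ∀ j, g j = comps f ((j - 1) * k + 1) k)
    (U : Set (Set X)) (hU : IsFiniteOpenCover U) :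
    (∀ s : ℝ, 0 < s →
        (k : ℝ≥0∞) ^ s * hCover f 1 K U s ≤ hCover g 1 K (dynJoin f 1 U k) s) ∧
      DbarCover g 1 K = DbarCover f 1 K := by
  refine ⟨fun s hs => (hCover_power_dynJoin hper hg hk K hU.1 hU.2.2 hs).ge, ?_⟩
  simp only [DbarCover]
  congr 2
  ext s
  exact and_congr_right fun hs => hCoverSup_power_eq_zero_iff hf hper hg hk K hs

/-- Power rule for periodic systems: the reverse cover inequality and `D̄ₖ(f^k) = D̄ₖ(f)`. -/
theorem power_rule_periodic {X : Type*} [TopologicalSpace X] [CompactSpace X] (f : ℕ → X → X)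
    (hf : ∀ i, Continuous (f i)) (k : ℕ) (hk : 1 ≤ k)
    (hper : ∀ i, 1 ≤ i → f (i + k) = f i) (K : Set X) (hK : K.Nonempty)
    (g : ℕ → X → X) (hg : ∀ j, g j = comps f ((j - 1) * k + 1) k)
    (U : Set (Set X)) (hU : IsFiniteOpenCover U) :
    (∀ s : ℝ, 0 < s →
        (k : ℝ≥0∞) ^ s * hCover f 1 K U s ≤ hCover g 1 K (dynJoin f 1 U k) s) ∧
      DbarCover g 1 K = DbarCover f 1 K :=
  power_rule_periodic_general f hf k hk hper K g hg U hU
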